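/- Let H ⊆ G ⊆ S_n with [G : H] = n, let g₁,...,gₙ be right coset representatives of H in G, and let z ∈ Z(H) be such that G is generated by g₁⁻¹ z g₁,...,gₙ⁻¹ z gₙ. Then the operation Hg_i ▷ Hg_j := Hg_i g_j⁻¹ z g_j is well-defined on H\G and makes H\G a connected quandle with n elements. -/

import Mathlib

universe u

/-- A quandle with a *right* self-distributive operation `x ▷ y`, following
Ehrman–Gurpinar–Thibault–Yetter. -/
class RQuandle (Q : Type u) where
  act : Q → Q → Q
  act_self : ∀ x : Q, act x x = x
  act_rinv : ∀ a b : Q, ∃! y, act y a = b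
  act_distrib : ∀ a b c : Q, act (act a b) c = act (act a c) (act b c)

infixl:65 " ▷ " => RQuandle.act

namespace RQuandle

variable {Q : Type u} [RQuandle Q]

/-- The inner automorphism `S_y : x ↦ x ▷ y`, as a permutation of `Q`. -/
noncomputable def SPerm (y : Q) : Equiv.Perm Q :=
  Equiv.ofBijective (fun x => x ▷ y)
    ⟨fun a b h => by
        obtain ⟨c, _, hu⟩ := RQuandle.act_rinv y (b ▷ y)
        exact (hu a h).trans (hu b rfl).symm,
      fun b => (RQuandle.act_rinv y b).exists⟩

@[simp] lemma SPerm_apply (x y : Q) : SPerm y x = x ▷ y := rfl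

/-- The inner automorphism group of a quandle: the subgroup of `Equiv.Perm Q`
generated by the maps `S_y`. -/
def Inn (Q : Type u) [RQuandle Q] : Subgroup (Equiv.Perm Q) :=
  Subgroup.closure (Set.range (SPerm : Q → Equiv.Perm Q))

lemma SPerm_mem_Inn (y : Q) : SPerm y ∈ Inn Q :=
  Subgroup.subset_closure ⟨y, rfl⟩

/-- A quandle is (algebraically) connected when `Inn Q` acts transitively. -/
def Connected (Q : Type u) [RQuandle Q] : Prop :=
  ∀ x y : Q, ∃ p ∈ Inn Q, p x = y

/-- The orbit of `s` under the inner automorphism group. -/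
def orbitSet (s : Q) : Set Q := {t | ∃ p ∈ Inn Q, p s = t}

/-- `f` is an automorphism of the quandle `Q`. -/
def IsQAut (f : Equiv.Perm Q) : Prop := ∀ x y : Q, f (x ▷ y) = f x ▷ f y

/-- Key conjugation identity: in left-to-right (right action) convention this is
`S_{x ▷ y} = S_y⁻¹ S_x S_y`. -/
lemma SPerm_conj (x y : Q) : SPerm (x ▷ y) = SPerm y * SPerm x * (SPerm y)⁻¹ := by
  rw [eq_mul_inv_iff_mul_eq]
  ext u
  simp only [Equiv.Perm.mul_apply, SPerm_apply]
  exact (RQuandle.act_distrib u x y).symm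

/-- Relators for the universal augmentation group `Γ_Q`: `|x ▷ y| = |y|⁻¹ |x| |y|`. -/
def augRels (Q : Type u) [RQuandle Q] : Set (FreeGroup Q) :=
  {w | ∃ x y : Q,
    w = FreeGroup.of (x ▷ y) * ((FreeGroup.of y)⁻¹ * FreeGroup.of x * FreeGroup.of y)⁻¹}

/-- The universal augmentation group `Γ_Q` of a quandle. -/
abbrev Gamma (Q : Type u) [RQuandle Q] := PresentedGroup (augRels Q)

/-- The generator `|x| ∈ Γ_Q`. -/
def gen (x : Q) : Gamma Q := PresentedGroup.of x

/-- The canonical homomorphism `Γ_Q → Aut(Q)` sending `|y|` to `S_y`.  Since the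
paper composes automorphisms as right actions, this is a homomorphism into the
opposite of the permutation group. -/
noncomputable def canHom (Q : Type u) [RQuandle Q] : Gamma Q →* (Equiv.Perm Q)ᵐᵒᵖ :=
  PresentedGroup.toGroup (f := fun y => MulOpposite.op (SPerm y)) (by
    rintro w ⟨x, y, rfl⟩
    simp only [map_mul, map_inv, FreeGroup.lift_apply_of]
    rw [← MulOpposite.op_inv, ← MulOpposite.op_mul, ← MulOpposite.op_mul, SPerm_conj]
    simp [mul_assoc])

@[simp] lemma canHom_gen (y : Q) : canHom Q (gen y) = MulOpposite.op (SPerm y) :=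
  PresentedGroup.toGroup.of _

lemma orbit_act_mem {s x : Q} (y : Q) (hx : x ∈ orbitSet s) : x ▷ y ∈ orbitSet s := by
  obtain ⟨p, hp, rfl⟩ := hx
  exact ⟨SPerm y * p, mul_mem (SPerm_mem_Inn y) hp, rfl⟩

lemma orbit_actinv_mem {s x : Q} (y : Q) (hx : x ∈ orbitSet s) :
    (SPerm y).symm x ∈ orbitSet s := by
  obtain ⟨p, hp, rfl⟩ := hx
  exact ⟨(SPerm y)⁻¹ * p, mul_mem (inv_mem (SPerm_mem_Inn y)) hp, rfl⟩

lemma orbit_mem_iff (t : Q) (y : Q) {u : Q} :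
    u ∈ orbitSet t ↔ u ▷ y ∈ orbitSet t := by
  constructor
  · exact fun h => orbit_act_mem y h
  · intro h
    have := orbit_actinv_mem y h
    rw [← SPerm_apply u y, Equiv.symm_apply_apply] at this
    exact this

/-- Each orbit of `Inn Q` is a subquandle. -/
instance orbitQuandle (s : Q) : RQuandle (orbitSet s) where
  act a b := ⟨a.1 ▷ b.1, orbit_act_mem b.1 a.2⟩
  act_self a := Subtype.ext (RQuandle.act_self a.1)
  act_rinv a b := by
    refine ⟨⟨(SPerm a.1).symm b.1, orbit_actinv_mem a.1 b.2⟩, Subtype.ext ?_, ?_⟩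
    · exact (SPerm a.1).apply_symm_apply b.1
    · rintro ⟨z, hz⟩ h
      apply Subtype.ext
      have hz' : z ▷ a.1 = b.1 := congrArg Subtype.val h
      show z = (SPerm a.1).symm b.1
      rw [← hz']
      exact ((SPerm a.1).symm_apply_apply z).symm
  act_distrib a b c := Subtype.ext (RQuandle.act_distrib a.1 b.1 c.1)

/-- Restriction of `S_x` to the orbit of `t`. -/
noncomputable def phi (t : Q) (x : Q) : Equiv.Perm (orbitSet t) :=
  (SPerm x).subtypePerm (fun u => (orbit_mem_iff t x (u := u)).symm)

/-- The quandle axioms, as a predicate on a binary operation. -/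
def IsRQuandleOp {A : Type u} (op : A → A → A) : Prop :=
  (∀ x, op x x = x) ∧ (∀ a b, ∃! y, op y a = b) ∧
    ∀ a b c, op (op a b) c = op (op a c) (op b c)

end RQuandle

/-!
Write `f(b) = b⁻¹ z b`. Since `z` commutes with `H`, `f(hb) = f(b)` for `h ∈ H`, so `f` is a
function on the right cosets and `X ▷ Y = X · f(Y)` is right multiplication of cosets by an
element of `G`, which is well defined and bijective in `X`. Idempotence is `z ∈ H`, and right
distributivity is the identity `f(b f(c)) = f(c)⁻¹ f(b) f(c)`. Right multiplication of `Ha` by a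
generator `f(c)` of `G` is the inner automorphism `S_{Hc}`, so the orbit of `Ha` contains `Hag`
for every `g ∈ G`: the quandle is connected.
-/

open QuotientGroup

theorem QuotientGroup.natCard_quotient_rightRel {K : Type*} [Group K] (S : Subgroup K) :
    Nat.card (Quotient (rightRel S)) = S.index :=
  Nat.card_congr (quotientRightRelEquivQuotientLeftRel S)

namespace CosetQuandle

variable {K : Type*} [Group K] {S : Subgroup K} {z : K}

theorem mk_eq_mk_iff {a b : K} :
    (Quotient.mk'' a : Quotient (rightRel S)) = Quotient.mk'' b ↔ b * a⁻¹ ∈ S :=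
  Quotient.eq''.trans rightRel_apply

theorem rightRel_mul_right {a a' : K} (h : rightRel S a a') (c : K) :
    rightRel S (a * c) (a' * c) := by
  rw [rightRel_apply] at h ⊢
  simpa [mul_assoc] using h

theorem conj_eq_of_rightRel (hz : ∀ k ∈ S, k * z = z * k) {b b' : K} (h : rightRel S b b') :
    b⁻¹ * z * b = b'⁻¹ * z * b' := by
  rw [rightRel_apply] at h
  calc b⁻¹ * z * b = b'⁻¹ * ((b' * b⁻¹) * z) * b := by group
    _ = b'⁻¹ * (z * (b' * b⁻¹)) * b := by rw [hz _ h]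
    _ = b'⁻¹ * z * b' := by group

variable (S z) in
def act (hz : ∀ k ∈ S, k * z = z * k) :
    Quotient (rightRel S) → Quotient (rightRel S) → Quotient (rightRel S) :=
  Quotient.map₂' (fun a b => a * (b⁻¹ * z * b)) fun _ _ ha _ _ hb => by
    rw [conj_eq_of_rightRel hz hb]
    exact rightRel_mul_right ha _

variable (hz : ∀ k ∈ S, k * z = z * k)
include hz

theorem act_mk (a b : K) :
    act S z hz (Quotient.mk'' a) (Quotient.mk'' b) = Quotient.mk'' (a * b⁻¹ * z * b) := by
  rw [show a * b⁻¹ * z * b = a * (b⁻¹ * z * b) by group]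
  rfl

theorem act_self_of_mem (hzS : z ∈ S) (X : Quotient (rightRel S)) : act S z hz X X = X := by
  induction X using Quotient.inductionOn' with | h a =>
  rw [act_mk, mk_eq_mk_iff, show a * (a * a⁻¹ * z * a)⁻¹ = z⁻¹ by group]
  exact inv_mem hzS

theorem existsUnique_act_eq (X Y : Quotient (rightRel S)) : ∃! W, act S z hz W X = Y := by
  induction X using Quotient.inductionOn' with | h a =>
  induction Y using Quotient.inductionOn' with | h b =>
  refine ⟨Quotient.mk'' (b * (a⁻¹ * z * a)⁻¹), ?_, fun W hW => ?_⟩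
  · show act S z hz _ _ = _
    rw [act_mk, mk_eq_mk_iff, show b * (b * (a⁻¹ * z * a)⁻¹ * a⁻¹ * z * a)⁻¹ = 1 by group]
    exact one_mem S
  · induction W using Quotient.inductionOn' with | h y =>
    rw [act_mk, mk_eq_mk_iff] at hW
    rw [mk_eq_mk_iff, show b * (a⁻¹ * z * a)⁻¹ * y⁻¹ = b * (y * a⁻¹ * z * a)⁻¹ by group]
    exact hW

theorem act_act (X Y W : Quotient (rightRel S)) :
    act S z hz (act S z hz X Y) W = act S z hz (act S z hz X W) (act S z hz Y W) := by
  induction X using Quotient.inductionOn' with | h a =>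
  induction Y using Quotient.inductionOn' with | h b =>
  induction W using Quotient.inductionOn' with | h c =>
  simp only [act_mk]
  congr 1
  group

theorem isRQuandleOp_act (hzS : z ∈ S) : RQuandle.IsRQuandleOp (act S z hz) :=
  ⟨act_self_of_mem hz hzS, existsUnique_act_eq hz, act_act hz⟩

theorem eqvGen_mk_mul_of_mem_closure {g : K}
    (hg : g ∈ Subgroup.closure {x : K | ∃ c : K, x = c⁻¹ * z * c}) (a : K) :
    Relation.EqvGen (fun A B => ∃ C, act S z hz A C = B)
      (Quotient.mk'' a) (Quotient.mk'' (a * g)) := by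
  induction hg using Subgroup.closure_induction generalizing a with
  | mem x hx =>
    obtain ⟨c, rfl⟩ := hx
    exact .rel _ _ ⟨Quotient.mk'' c, by rw [act_mk]; group⟩
  | one => simpa using .refl _
  | mul x y _ _ ihx ihy => exact .trans _ _ _ (ihx a) (by simpa [mul_assoc] using ihy (a * x))
  | inv x _ ih => exact .symm _ _ (by simpa using ih (a * x⁻¹))

theorem eqvGen_act_of_closure_eq_top
    (hgen : Subgroup.closure {x : K | ∃ c : K, x = c⁻¹ * z * c} = ⊤)
    (X Y : Quotient (rightRel S)) :
    Relation.EqvGen (fun A B => ∃ C, act S z hz A C = B) X Y := by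
  induction X using Quotient.inductionOn' with | h a =>
  induction Y using Quotient.inductionOn' with | h b =>
  have := eqvGen_mk_mul_of_mem_closure hz (hgen ▸ Subgroup.mem_top (a⁻¹ * b)) a
  rwa [mul_inv_cancel_left] at this

end CosetQuandle

open RQuandle in
/-- Connectedness is stated as: any two cosets are related by the equivalence relation generated
by `A ∼ A ▷ C`. -/
theorem coset_quandle_construction {n : ℕ} (G H : Subgroup (Equiv.Perm (Fin n)))
    (hHG : H ≤ G) (hindex : (H.subgroupOf G).index = n)
    (z : Equiv.Perm (Fin n)) (hzH : z ∈ H) (hzc : ∀ k ∈ H, k * z = z * k)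
    (hgen : Subgroup.closure
      {x : ↥G | ∃ g : ↥G, x = g⁻¹ * (⟨z, hHG hzH⟩ : ↥G) * g} = ⊤) :
    ∃ op : Quotient (QuotientGroup.rightRel (H.subgroupOf G)) →
        Quotient (QuotientGroup.rightRel (H.subgroupOf G)) →
        Quotient (QuotientGroup.rightRel (H.subgroupOf G)),
      (∀ a b : ↥G, op (Quotient.mk'' a) (Quotient.mk'' b) =
          Quotient.mk'' (a * b⁻¹ * (⟨z, hHG hzH⟩ : ↥G) * b)) ∧
      IsRQuandleOp op ∧
      (∀ X Y : Quotient (QuotientGroup.rightRel (H.subgroupOf G)),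
        Relation.EqvGen (fun A B => ∃ C, op A C = B) X Y) ∧
      Nat.card (Quotient (QuotientGroup.rightRel (H.subgroupOf G))) = n := by
  have hzc' : ∀ k ∈ H.subgroupOf G, k * ⟨z, hHG hzH⟩ = ⟨z, hHG hzH⟩ * k :=
    fun k hk => Subtype.ext (hzc k hk)
  exact ⟨CosetQuandle.act _ _ hzc', CosetQuandle.act_mk hzc',
    CosetQuandle.isRQuandleOp_act hzc' hzH, CosetQuandle.eqvGen_act_of_closure_eq_top hzc' hgen,
    (natCard_quotient_rightRel _).trans hindex⟩
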